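/- arXiv:0705.0739 — 7 statements merged into one kernel-verified Lean document; each statement's English description precedes it below -/
import Mathlib

section
/- Let f be an entropy generator and suppose there exist constants α, β, γ ∈ ℝ such that for all probability distributions P, Q on ℕ one has H_f(P⊗Q) = α·H_f(P) + β·H_f(Q) − γ·H_f(P)·H_f(Q). Then α = β = 1, and f satisfies the functional equation f(x·y) = x·f(y) + y·f(x) + γ·f(x)·f(y) for all x, y ∈ [0, ∞). -/
/-- A probability distribution on ℕ: nonnegative weights summing to 1. -/
def IsProbDist (p : ℕ → ℝ) : Prop := (∀ i, 0 ≤ p i) ∧ HasSum p 1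

/-- An entropy generator: real analytic on `[0,∞)`, strictly convex on `[0,∞)`,
with `f 0 = f 1 = 0` and `f' 1 = 1`. -/
def IsEntropyGenerator (f : ℝ → ℝ) : Prop :=
  (∀ x ∈ Set.Ici (0 : ℝ), AnalyticAt ℝ f x) ∧
  StrictConvexOn ℝ (Set.Ici (0 : ℝ)) f ∧
  f 0 = 0 ∧ f 1 = 0 ∧ deriv f 1 = 1

/-!
Testing the identity on three-point distributions `(a, b, 1 - a - b)` already determines
everything. Strict convexity gives `f (1/2) < 0`, and the distributions `(1/2, 1/2)` and `(1)`
then force `α = β = 1`. After that, the defect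
`D x y = f (x y) - x f y - y f x - γ f x f y` sums to zero over the `3 × 3` grid of any two
three-point distributions. Each row sum `R` thus satisfies `R a + R b + R (1 - a - b) = 0` and
`R 0 = 0`, so `R` is additive on the simplex; being analytic it is linear, hence zero. The same
argument applied to `D u` gives `D = 0` on `[0,1]²`, and analytic continuation in each variable
extends this to the quadrant.
-/

open Set Filter Topology

section ThreePointDistributions

open Finset

def tripleDist (a b : ℝ) : ℕ → ℝ
  | 0 => a
  | 1 => b
  | 2 => 1 - a - b
  | _ + 3 => 0

lemma tripleDist_eq_zero {a b : ℝ} {n : ℕ} (hn : n ∉ range 3) : tripleDist a b n = 0 := by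
  obtain ⟨k, rfl⟩ : ∃ k, n = k + 3 := ⟨n - 3, by simp at hn; omega⟩
  rfl

lemma isProbDist_tripleDist {a b : ℝ} (ha : 0 ≤ a) (hb : 0 ≤ b) (hab : a + b ≤ 1) :
    IsProbDist (tripleDist a b) := by
  refine ⟨fun n => ?_, ?_⟩
  · match n with
    | 0 => exact ha
    | 1 => exact hb
    | 2 => exact sub_nonneg.2 (by linarith)
    | _ + 3 => exact le_rfl
  · have : HasSum (tripleDist a b) (∑ n ∈ range 3, tripleDist a b n) :=
      hasSum_sum_of_ne_finset_zero fun n => tripleDist_eq_zero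
    simpa [sum_range_succ, tripleDist] using this

lemma tsum_tripleDist {φ : ℝ → ℝ} (h0 : φ 0 = 0) (a b : ℝ) :
    ∑' n, φ (tripleDist a b n) = φ a + φ b + φ (1 - a - b) := by
  rw [tsum_eq_sum fun n hn => by rw [tripleDist_eq_zero hn, h0]]
  simp [sum_range_succ, tripleDist]

lemma tsum_tripleDist_mul_tripleDist {φ : ℝ → ℝ} (h0 : φ 0 = 0) (a b c d : ℝ) :
    ∑' ij : ℕ × ℕ, φ (tripleDist a b ij.1 * tripleDist c d ij.2) =
      (φ (a * c) + φ (a * d) + φ (a * (1 - c - d)))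
        + (φ (b * c) + φ (b * d) + φ (b * (1 - c - d)))
        + (φ ((1 - a - b) * c) + φ ((1 - a - b) * d) + φ ((1 - a - b) * (1 - c - d))) := by
  rw [tsum_eq_sum (s := range 3 ×ˢ range 3) fun ij hij => ?_, sum_product]
  · simp [sum_range_succ, tripleDist]
  · rcases not_and_or.1 (mem_product.not.1 hij) with h | h <;> simp [tripleDist_eq_zero h, h0]

end ThreePointDistributions

def IsPseudoAdditive (f : ℝ → ℝ) (α β γ : ℝ) : Prop :=
  ∀ p q : ℕ → ℝ, IsProbDist p → IsProbDist q →
    (-∑' ij : ℕ × ℕ, f (p ij.1 * q ij.2)) =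
      α * (-∑' i, f (p i)) + β * (-∑' j, f (q j)) - γ * (-∑' i, f (p i)) * (-∑' j, f (q j))

namespace IsPseudoAdditive

variable {f : ℝ → ℝ} {α β γ : ℝ}

lemma sum_grid (h : IsPseudoAdditive f α β γ) (hf0 : f 0 = 0) {a b c d : ℝ}
    (ha : 0 ≤ a) (hb : 0 ≤ b) (hab : a + b ≤ 1) (hc : 0 ≤ c) (hd : 0 ≤ d) (hcd : c + d ≤ 1) :
    (f (a * c) + f (a * d) + f (a * (1 - c - d)))
        + (f (b * c) + f (b * d) + f (b * (1 - c - d)))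
        + (f ((1 - a - b) * c) + f ((1 - a - b) * d) + f ((1 - a - b) * (1 - c - d)))
      = α * (f a + f b + f (1 - a - b)) + β * (f c + f d + f (1 - c - d))
        + γ * (f a + f b + f (1 - a - b)) * (f c + f d + f (1 - c - d)) := by
  have := h _ _ (isProbDist_tripleDist ha hb hab) (isProbDist_tripleDist hc hd hcd)
  rw [tsum_tripleDist_mul_tripleDist hf0, tsum_tripleDist hf0, tsum_tripleDist hf0] at this
  linear_combination -this

lemma left_eq_one (h : IsPseudoAdditive f α β γ) (hf0 : f 0 = 0) (hf1 : f 1 = 0)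
    (hhalf : f (1 / 2) ≠ 0) : α = 1 := by
  have := h.sum_grid hf0 (a := 1 / 2) (b := 1 / 2) (c := 1) (d := 0) (by norm_num) (by norm_num)
    (by norm_num) zero_le_one le_rfl (by norm_num)
  norm_num [hf0, hf1] at this
  exact mul_right_cancel₀ hhalf (by linarith)

lemma right_eq_one (h : IsPseudoAdditive f α β γ) (hf0 : f 0 = 0) (hf1 : f 1 = 0)
    (hhalf : f (1 / 2) ≠ 0) : β = 1 := by
  have := h.sum_grid hf0 (a := 1) (b := 0) (c := 1 / 2) (d := 1 / 2) zero_le_one le_rfl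
    (by norm_num) (by norm_num) (by norm_num) (by norm_num)
  norm_num [hf0, hf1] at this
  exact mul_right_cancel₀ hhalf (by linarith)

end IsPseudoAdditive

section AdditiveOnSimplex

variable {φ : ℝ → ℝ}

lemma map_add_of_add_add_sub_eq_zero (h0 : φ 0 = 0)
    (h : ∀ a b : ℝ, 0 ≤ a → 0 ≤ b → a + b ≤ 1 → φ a + φ b + φ (1 - a - b) = 0)
    {a b : ℝ} (ha : 0 ≤ a) (hb : 0 ≤ b) (hab : a + b ≤ 1) : φ (a + b) = φ a + φ b := by
  have hab' := h (a + b) 0 (by linarith) le_rfl (by linarith)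
  rw [h0, add_zero, sub_zero, ← sub_sub] at hab'
  linarith [h a b ha hb hab]

lemma deriv_eq_deriv_zero_of_map_add (hφ : AnalyticOnNhd ℝ φ (Icc 0 1))
    (hadd : ∀ a b : ℝ, 0 ≤ a → 0 ≤ b → a + b ≤ 1 → φ (a + b) = φ a + φ b)
    {s : ℝ} (hs : s ∈ Ico 0 1) : deriv φ s = deriv φ 0 := by
  have hs' : s ∈ Icc (0 : ℝ) 1 := Ico_subset_Icc_self hs
  -- additivity gives `φ (s + x) = φ s + φ x` only for small `x > 0`; analyticity gives it near `0`
  have hfreq : ∃ᶠ x in 𝓝[≠] (0 : ℝ), φ (s + x) = φ s + φ x := by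
    have hev : ∀ᶠ x in 𝓝[>] (0 : ℝ), φ (s + x) = φ s + φ x := by
      filter_upwards [Ioo_mem_nhdsGT (by linarith [hs.2] : (0 : ℝ) < 1 - s)] with x hx
      exact hadd s x hs.1 hx.1.le (by linarith [hx.2])
    exact hev.frequently.filter_mono (nhdsWithin_mono _ fun x hx => ne_of_gt hx)
  have heq : (fun x => φ (s + x)) =ᶠ[𝓝 0] fun x => φ s + φ x :=
    ((AnalyticAt.fun_comp (by simpa using hφ s hs') (by fun_prop)).frequently_eq_iff_eventually_eq
      (analyticAt_const.add (hφ 0 (by simp)))).1 (by simpa using hfreq)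
  simpa [deriv_comp_const_add] using heq.deriv_eq

lemma eqOn_mul_of_map_add (hφ : AnalyticOnNhd ℝ φ (Icc 0 1))
    (hadd : ∀ a b : ℝ, 0 ≤ a → 0 ≤ b → a + b ≤ 1 → φ (a + b) = φ a + φ b) :
    EqOn φ (fun x => deriv φ 0 * x) (Icc 0 1) := by
  have h0 : φ 0 = 0 := by simpa using hadd 0 0 le_rfl le_rfl (by norm_num)
  refine eq_of_has_deriv_right_eq (f' := fun _ => deriv φ 0) (fun s hs => ?_)
    (fun x _ => ((hasDerivAt_id x).const_mul _).hasDerivWithinAt.congr_deriv (mul_one _))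
    (fun x hx => (hφ x hx).continuousAt.continuousWithinAt) (by fun_prop) (by simp [h0])
  rw [← deriv_eq_deriv_zero_of_map_add hφ hadd hs]
  exact (hφ s (Ico_subset_Icc_self hs)).differentiableAt.hasDerivAt.hasDerivWithinAt

lemma eqOn_zero_of_add_add_sub_eq_zero (hφ : AnalyticOnNhd ℝ φ (Icc 0 1)) (h0 : φ 0 = 0)
    (h : ∀ a b : ℝ, 0 ≤ a → 0 ≤ b → a + b ≤ 1 → φ a + φ b + φ (1 - a - b) = 0) :
    EqOn φ 0 (Icc 0 1) := by
  have hlin := eqOn_mul_of_map_add hφ fun a b => map_add_of_add_add_sub_eq_zero h0 h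
  have h1 : φ 1 = 0 := by simpa [h0] using h 1 0 zero_le_one le_rfl (by norm_num)
  intro x hx
  have hc : deriv φ 0 = 0 := by simpa [h1] using (hlin (right_mem_Icc.2 zero_le_one)).symm
  simpa [hc] using hlin hx

end AdditiveOnSimplex

lemma AnalyticOnNhd.eqOn_zero_Ici {g : ℝ → ℝ} (hg : AnalyticOnNhd ℝ g (Ici 0))
    (h : EqOn g 0 (Icc 0 1)) : EqOn g 0 (Ici 0) := by
  refine hg.eqOn_zero_of_preconnected_of_eventuallyEq_zero isPreconnected_Ici
    (by norm_num : (1 / 2 : ℝ) ∈ Ici 0) ?_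
  filter_upwards [Icc_mem_nhds (by norm_num : (0 : ℝ) < 1 / 2) (by norm_num : (1 / 2 : ℝ) < 1)]
    with x hx using h hx

lemma eq_zero_of_grid {D : ℝ → ℝ → ℝ}
    (hleft : ∀ y, 0 ≤ y → AnalyticOnNhd ℝ (fun x => D x y) (Ici 0))
    (hright : ∀ x, 0 ≤ x → AnalyticOnNhd ℝ (D x) (Ici 0))
    (hleft_zero : ∀ y, D 0 y = 0) (hright_zero : ∀ x, D x 0 = 0)
    (hgrid : ∀ a b c d : ℝ, 0 ≤ a → 0 ≤ b → a + b ≤ 1 → 0 ≤ c → 0 ≤ d → c + d ≤ 1 →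
      (D a c + D a d + D a (1 - c - d)) + (D b c + D b d + D b (1 - c - d))
        + (D (1 - a - b) c + D (1 - a - b) d + D (1 - a - b) (1 - c - d)) = 0)
    {x y : ℝ} (hx : 0 ≤ x) (hy : 0 ≤ y) : D x y = 0 := by
  have hrow : ∀ c d : ℝ, 0 ≤ c → 0 ≤ d → c + d ≤ 1 →
      EqOn (fun u => D u c + D u d + D u (1 - c - d)) 0 (Icc 0 1) := fun c d hc hd hcd =>
    eqOn_zero_of_add_add_sub_eq_zero
      (fun u hu => ((hleft c hc u hu.1).add (hleft d hd u hu.1)).add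
        (hleft _ (by linarith) u hu.1))
      (by simp [hleft_zero]) fun a b ha hb hab => hgrid a b c d ha hb hab hc hd hcd
  have hsquare : ∀ u ∈ Icc (0 : ℝ) 1, EqOn (D u) 0 (Icc 0 1) := fun u hu =>
    eqOn_zero_of_add_add_sub_eq_zero (fun v hv => hright u hu.1 v hv.1) (hright_zero u)
      fun c d hc hd hcd => hrow c d hc hd hcd hu
  have hstrip : ∀ v ∈ Icc (0 : ℝ) 1, EqOn (fun u => D u v) 0 (Ici 0) := fun v hv =>
    (hleft v hv.1).eqOn_zero_Ici fun u hu => hsquare u hu hv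
  exact (hright x hx).eqOn_zero_Ici (fun v hv => hstrip v hv hx) hy

def multDefect (f : ℝ → ℝ) (γ x y : ℝ) : ℝ :=
  f (x * y) - x * f y - y * f x - γ * f x * f y

section MultDefect

variable {f : ℝ → ℝ} {γ : ℝ}

lemma multDefect_comm (x y : ℝ) : multDefect f γ x y = multDefect f γ y x := by
  unfold multDefect; ring_nf

lemma analyticOnNhd_multDefect_left (hf : AnalyticOnNhd ℝ f (Ici 0)) {y : ℝ} (hy : 0 ≤ y) :
    AnalyticOnNhd ℝ (fun x => multDefect f γ x y) (Ici 0) := fun x hx => by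
  have hfxy : AnalyticAt ℝ (fun x => f (x * y)) x :=
    AnalyticAt.fun_comp (hf _ (mul_nonneg hx hy)) (by fun_prop)
  have hfx := hf x hx
  exact ((hfxy.sub (analyticAt_id.mul analyticAt_const)).sub (analyticAt_const.mul hfx)).sub
    ((analyticAt_const.mul hfx).mul analyticAt_const)

lemma analyticOnNhd_multDefect_right (hf : AnalyticOnNhd ℝ f (Ici 0)) {x : ℝ} (hx : 0 ≤ x) :
    AnalyticOnNhd ℝ (multDefect f γ x) (Ici 0) := by
  rw [show multDefect f γ x = fun y => multDefect f γ y x from funext (multDefect_comm x)]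
  exact analyticOnNhd_multDefect_left hf hx

end MultDefect

theorem stmt0 (f : ℝ → ℝ) (hf : IsEntropyGenerator f) (α β γ : ℝ)
    (h : ∀ p q : ℕ → ℝ, IsProbDist p → IsProbDist q →
      (-∑' ij : ℕ × ℕ, f (p ij.1 * q ij.2)) =
        α * (-∑' i, f (p i)) + β * (-∑' j, f (q j))
          - γ * (-∑' i, f (p i)) * (-∑' j, f (q j))) :
    α = 1 ∧ β = 1 ∧
      ∀ x y : ℝ, 0 ≤ x → 0 ≤ y →
        f (x * y) = x * f y + y * f x + γ * f x * f y := by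
  obtain ⟨hfa, hconv, hf0, hf1, -⟩ := hf
  have h : IsPseudoAdditive f α β γ := h
  have hhalf : f (1 / 2) < 0 := by
    have := hconv.2 self_mem_Ici (by norm_num : (1 : ℝ) ∈ Ici 0) zero_ne_one
      (by norm_num : (0 : ℝ) < 1 / 2) (by norm_num : (0 : ℝ) < 1 / 2) (by norm_num)
    simpa [hf0, hf1] using this
  obtain rfl := h.left_eq_one hf0 hf1 hhalf.ne
  obtain rfl := h.right_eq_one hf0 hf1 hhalf.ne
  refine ⟨rfl, rfl, fun x y hx hy => ?_⟩
  have := eq_zero_of_grid (D := multDefect f γ) (fun _ => analyticOnNhd_multDefect_left hfa)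
    (fun _ => analyticOnNhd_multDefect_right hfa) (by simp [multDefect, hf0])
    (by simp [multDefect, hf0]) (fun a b c d ha hb hab hc hd hcd => by
      unfold multDefect; linear_combination h.sum_grid hf0 ha hb hab hc hd hcd) hx hy
  unfold multDefect at this
  linarith
end

section
/- Let f be an entropy generator and γ ∈ ℝ, and suppose that for all probability distributions P, Q on ℕ one has ∑_{i,j} f(p_i·q_j) = ∑_i f(p_i) + ∑_j f(q_j) + γ·(∑_i f(p_i))·(∑_j f(q_j)). Then for all natural numbers m, n ≥ 1: f(1/(mn)) = (1/m)·f(1/n) + (1/n)·f(1/m) + γ·f(1/m)·f(1/n). -/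
noncomputable def unif (m : ℕ) : ℕ → ℝ := fun i => if i < m then (1 : ℝ) / m else 0

lemma unif_isProbDist (m : ℕ) (hm : 1 ≤ m) : IsProbDist (unif m) := by
  constructor
  · intro i
    unfold unif
    split <;> positivity
  · have : HasSum (unif m) (∑ i ∈ Finset.range m, unif m i) :=
      hasSum_sum_of_ne_finset_zero (by
        intro i hi
        simp only [unif, Finset.mem_range, not_lt] at hi ⊢
        simp [Nat.not_lt.mpr hi])
    convert this using 1
    have hm' : (m : ℝ) ≠ 0 := Nat.cast_ne_zero.mpr (by omega)
    simp only [unif]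
    rw [Finset.sum_ite_of_true (by intro i hi; exact Finset.mem_range.mp hi)]
    simp [hm']

lemma tsum_unif (f : ℝ → ℝ) (hf0 : f 0 = 0) (m : ℕ) :
    (∑' i, f (unif m i)) = m * f (1 / m) := by
  rw [tsum_eq_sum (s := Finset.range m) (by
    intro i hi
    simp only [unif, Finset.mem_range, not_lt] at hi ⊢
    simp [Nat.not_lt.mpr hi, hf0])]
  have hc : ∀ i ∈ Finset.range m, f (unif m i) = f (1 / m) := fun i hi => by
    simp [unif, Finset.mem_range.mp hi]
  rw [Finset.sum_congr rfl hc, Finset.sum_const]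
  simp [mul_comm]

theorem stmt1 (f : ℝ → ℝ) (hf : IsEntropyGenerator f) (γ : ℝ)
    (h : ∀ p q : ℕ → ℝ, IsProbDist p → IsProbDist q →
      (∑' ij : ℕ × ℕ, f (p ij.1 * q ij.2)) =
        (∑' i, f (p i)) + (∑' j, f (q j))
          + γ * (∑' i, f (p i)) * (∑' j, f (q j))) :
    ∀ m n : ℕ, 1 ≤ m → 1 ≤ n →
      f (1 / ((m : ℝ) * n)) =
        (1 / (m : ℝ)) * f (1 / (n : ℝ)) + (1 / (n : ℝ)) * f (1 / (m : ℝ))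
          + γ * f (1 / (m : ℝ)) * f (1 / (n : ℝ)) := by
  intro m n hm hn
  have hf0 : f 0 = 0 := hf.2.2.1
  have key := h (unif m) (unif n) (unif_isProbDist m hm) (unif_isProbDist n hn)
  have hdouble : (∑' ij : ℕ × ℕ, f (unif m ij.1 * unif n ij.2)) =
      (m * n : ℝ) * f (1 / ((m : ℝ) * n)) := by
    rw [tsum_eq_sum (s := (Finset.range m) ×ˢ (Finset.range n)) (by
      intro ij hij
      simp only [Finset.mem_product, Finset.mem_range, not_and_or, not_lt] at hij
      rcases hij with h1 | h2
      · simp [unif, Nat.not_lt.mpr h1, hf0]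
      · simp [unif, Nat.not_lt.mpr h2, hf0])]
    have hc : ∀ ij ∈ (Finset.range m) ×ˢ (Finset.range n),
        f (unif m ij.1 * unif n ij.2) = f (1 / ((m : ℝ) * n)) := fun ij hij => by
      simp only [Finset.mem_product, Finset.mem_range] at hij
      simp only [unif, if_pos hij.1, if_pos hij.2]
      rw [div_mul_div_comm, one_mul]
    rw [Finset.sum_congr rfl hc, Finset.sum_const]
    simp [mul_assoc]
  rw [hdouble, tsum_unif f hf0, tsum_unif f hf0] at key
  have hm' : (m : ℝ) ≠ 0 := Nat.cast_ne_zero.mpr (by omega)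
  have hn' : (n : ℝ) ≠ 0 := Nat.cast_ne_zero.mpr (by omega)
  field_simp at key ⊢
  linarith [key]
end

section
/- Let f : [0,∞) → ℝ be real analytic on [0,∞) and let γ ∈ ℝ. If f(q·r) = q·f(r) + r·f(q) + γ·f(q)·f(r) holds for all rational numbers q, r ∈ [0,1], then f(x·y) = x·f(y) + y·f(x) + γ·f(x)·f(y) holds for all real x, y ∈ [0,∞). -/
/-!
The defect `f (x * y) - (x * f y + y * f x + γ * f x * f y)` is, in each variable separately, real
analytic on `[0, ∞)` and symmetric in `x` and `y`. A function analytic on an interval that vanishes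
at the rationals of a nondegenerate subinterval vanishes there by continuity, hence on the whole
interval by the identity theorem. Applying this in `x`, first for rational `y` and then, by symmetry,
for arbitrary `y`, kills the defect on `[0, ∞)²`.
-/

open Set Filter Topology

theorem AnalyticOnNhd.eqOn_zero_of_eq_zero_of_rat {E : Type*} [NormedAddCommGroup E]
    [NormedSpace ℝ E] {g : ℝ → E} {U : Set ℝ} {a b : ℝ} (hg : AnalyticOnNhd ℝ g U)
    (hU : IsPreconnected U) (hab : a < b) (hsub : Ioo a b ⊆ U)
    (hq : ∀ q : ℚ, a < q → q < b → g q = 0) : EqOn g 0 U := by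
  have hIoo : EqOn g 0 (Ioo a b) :=
    EqOn.of_subset_closure (s := Ioo a b ∩ range ((↑) : ℚ → ℝ))
      (fun _ ⟨⟨ha, hb⟩, q, hq'⟩ => hq'.symm ▸ hq q (hq' ▸ ha) (hq' ▸ hb))
      (hg.continuousOn.mono hsub) continuousOn_const inter_subset_left
      (Rat.denseRange_cast.open_subset_closure_inter isOpen_Ioo)
  have hmid : (a + b) / 2 ∈ Ioo a b := ⟨by linarith, by linarith⟩
  exact hg.eqOn_zero_of_preconnected_of_eventuallyEq_zero hU (hsub hmid)
    (eventually_of_mem (Ioo_mem_nhds hmid.1 hmid.2) hIoo)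

def mulDefect (f : ℝ → ℝ) (γ x y : ℝ) : ℝ :=
  f (x * y) - (x * f y + y * f x + γ * f x * f y)

theorem mulDefect_comm (f : ℝ → ℝ) (γ x y : ℝ) : mulDefect f γ x y = mulDefect f γ y x := by
  unfold mulDefect
  rw [mul_comm x y]
  ring

theorem analyticOnNhd_mulDefect {f : ℝ → ℝ} (hf : AnalyticOnNhd ℝ f (Ici 0)) (γ : ℝ) {y : ℝ}
    (hy : 0 ≤ y) : AnalyticOnNhd ℝ (mulDefect f γ · y) (Ici 0) := by
  intro x hx
  have hfx : AnalyticAt ℝ f x := hf x hx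
  have hfxy : AnalyticAt ℝ (fun x => f (x * y)) x :=
    AnalyticAt.comp (g := f) (f := (· * y)) (hf _ (mul_nonneg hx hy)) (by fun_prop)
  exact hfxy.sub (((analyticAt_id.mul analyticAt_const).add (analyticAt_const.mul hfx)).add
    ((analyticAt_const.mul hfx).mul analyticAt_const))

theorem mulDefect_eqOn_zero_of_rat {f : ℝ → ℝ} (hf : AnalyticOnNhd ℝ f (Ici 0)) (γ : ℝ) {y : ℝ}
    (hy : 0 ≤ y) (hq : ∀ q : ℚ, 0 < q → q < 1 → mulDefect f γ q y = 0) :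
    EqOn (mulDefect f γ · y) 0 (Ici 0) :=
  (analyticOnNhd_mulDefect hf γ hy).eqOn_zero_of_eq_zero_of_rat isPreconnected_Ici zero_lt_one
    (Ioo_subset_Ioi_self.trans Ioi_subset_Ici_self)
    fun q h0 h1 => hq q (by exact_mod_cast h0) (by exact_mod_cast h1)

theorem stmt4 (f : ℝ → ℝ) (hf : ∀ x ∈ Set.Ici (0 : ℝ), AnalyticAt ℝ f x) (γ : ℝ)
    (h : ∀ q r : ℚ, 0 ≤ q → q ≤ 1 → 0 ≤ r → r ≤ 1 →
      f ((q : ℝ) * (r : ℝ)) =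
        (q : ℝ) * f (r : ℝ) + (r : ℝ) * f (q : ℝ) + γ * f (q : ℝ) * f (r : ℝ)) :
    ∀ x y : ℝ, 0 ≤ x → 0 ≤ y →
      f (x * y) = x * f y + y * f x + γ * f x * f y := by
  have hrat : ∀ q : ℚ, 0 < q → q < 1 → ∀ x : ℝ, 0 ≤ x → mulDefect f γ x q = 0 := by
    intro q hq0 hq1
    refine mulDefect_eqOn_zero_of_rat hf γ (by exact_mod_cast hq0.le) fun r hr0 hr1 => ?_
    rw [mulDefect, h r q hr0.le hr1.le hq0.le hq1.le, sub_self]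
  intro x y hx hy
  have hxy : mulDefect f γ x y = 0 :=
    mulDefect_eqOn_zero_of_rat hf γ hy
      (fun q hq0 hq1 => by rw [mulDefect_comm]; exact hrat q hq0 hq1 y hy) hx
  rwa [mulDefect, sub_eq_zero] at hxy
end

section
/- Let f be an entropy generator. Then for every probability distribution P = (p_i)_{i∈ℕ} on ℕ, the family (f(p_i))_{i∈ℕ} is summable and the f-entropy satisfies 0 ≤ H_f(P) < −f'(0), where f'(0) denotes the derivative of f at 0. -/
/-- Strict tangent-line inequality at `0` for an entropy generator. -/
lemma entropyGen_tangent {f : ℝ → ℝ} (hf : IsEntropyGenerator f)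
    {x : ℝ} (hx : 0 < x) : deriv f 0 * x < f x := by
  obtain ⟨han, hconv, hf0, hf1, hderiv1⟩ := hf
  have hd : DifferentiableAt ℝ f 0 := (han 0 (Set.mem_Ici.mpr le_rfl)).differentiableAt
  have h1 : deriv f 0 ≤ slope f 0 (x / 2) :=
    hconv.convexOn.deriv_le_slope (Set.mem_Ici.mpr le_rfl) (Set.mem_Ici.mpr (by positivity : (0:ℝ) ≤ x/2)) (by positivity) hd
  have h2 : slope f 0 (x / 2) < slope f 0 x := by
    have := hconv.secant_strict_mono (a := 0) (x := x / 2) (y := x)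
      (Set.mem_Ici.mpr le_rfl) (Set.mem_Ici.mpr (by positivity : (0:ℝ) ≤ x/2)) (Set.mem_Ici.mpr hx.le) (by positivity) hx.ne'
      (by linarith)
    simpa [slope_def_field] using this
  have h3 : deriv f 0 < slope f 0 x := lt_of_le_of_lt h1 h2
  rw [slope_def_field, hf0, sub_zero, sub_zero, lt_div_iff₀ hx] at h3
  linarith

lemma entropyGen_tangent_le {f : ℝ → ℝ} (hf : IsEntropyGenerator f)
    {x : ℝ} (hx : 0 ≤ x) : deriv f 0 * x ≤ f x := by
  rcases hx.eq_or_lt with h | h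
  · simp [← h, hf.2.2.1]
  · exact (entropyGen_tangent hf h).le

lemma entropyGen_nonpos {f : ℝ → ℝ} (hf : IsEntropyGenerator f)
    {x : ℝ} (h0 : 0 ≤ x) (h1 : x ≤ 1) : f x ≤ 0 := by
  obtain ⟨han, hconv, hf0, hf1, hderiv1⟩ := hf
  have := hconv.convexOn.2 (Set.mem_Ici.mpr le_rfl) (Set.mem_Ici.mpr zero_le_one)
    (show (0:ℝ) ≤ 1 - x by linarith) h0 (by ring)
  simpa [hf0, hf1] using this

theorem stmt7 (f : ℝ → ℝ) (hf : IsEntropyGenerator f)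
    (p : ℕ → ℝ) (hp : IsProbDist p) :
    Summable (fun i => f (p i)) ∧
      0 ≤ -∑' i, f (p i) ∧ (-∑' i, f (p i)) < -deriv f 0 := by
  obtain ⟨hp0, hps⟩ := hp
  have hple : ∀ i, p i ≤ 1 := fun i => le_hasSum hps i (fun j _ => hp0 j)
  have hfnp : ∀ i, f (p i) ≤ 0 := fun i => entropyGen_nonpos hf (hp0 i) (hple i)
  have hub : ∀ i, -f (p i) ≤ -deriv f 0 * p i := by
    intro i
    have := entropyGen_tangent_le hf (hp0 i)
    nlinarith
  have hsum_ub : Summable (fun i => -deriv f 0 * p i) := hps.summable.mul_left _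
  have hsum_neg : Summable (fun i => -f (p i)) :=
    Summable.of_nonneg_of_le (fun i => by linarith [hfnp i]) hub hsum_ub
  have hsum : Summable (fun i => f (p i)) := by simpa using hsum_neg.neg
  refine ⟨hsum, ?_, ?_⟩
  · rw [← tsum_neg]
    exact tsum_nonneg (fun i => by linarith [hfnp i])
  · have hex : ∃ i, 0 < p i := by
      by_contra h
      push_neg at h
      have : ∀ i, p i = 0 := fun i => le_antisymm (h i) (hp0 i)
      have := hps.tsum_eq
      simp [this] at *
      · exact one_ne_zero ((funext ‹∀ i, p i = 0› ▸ hps.tsum_eq).symm.trans tsum_zero)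
    obtain ⟨i, hi⟩ := hex
    have hstrict : -f (p i) < -deriv f 0 * p i := by
      have := entropyGen_tangent hf hi
      nlinarith
    have hlt : ∑' i, -f (p i) < ∑' i, -deriv f 0 * p i :=
      Summable.tsum_lt_tsum hub hstrict hsum_neg hsum_ub
    have heq : ∑' i, -deriv f 0 * p i = -deriv f 0 := by
      rw [tsum_mul_left, hps.tsum_eq, mul_one]
    rw [← tsum_neg]
    rw [heq] at hlt
    exact hlt
end

section
/- Let f be an entropy generator. Then the sequence n ↦ −n·f(1/n) (which equals H_f(U_n), the f-entropy of the uniform distribution on n points) is strictly increasing in n and converges to −f'(0) as n → ∞; consequently, the supremum of H_f(P) over all probability distributions P on ℕ equals −f'(0). -/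
open Filter Topology Set

noncomputable def uniformDist (n : ℕ) : ℕ → ℝ :=
  (Finset.range n : Set ℕ).indicator fun _ => 1 / n

section ChordSlopes

variable {f : ℝ → ℝ}

lemma StrictConvexOn.strictMonoOn_slope {𝕜 : Type*} [Field 𝕜] [LinearOrder 𝕜]
    [IsStrictOrderedRing 𝕜] {s : Set 𝕜} {g : 𝕜 → 𝕜} (hg : StrictConvexOn 𝕜 s g) {a : 𝕜}
    (ha : a ∈ s) : StrictMonoOn (slope g a) (s \ {a}) := by
  rintro x ⟨hxs, hxa⟩ y ⟨hys, hya⟩ hxy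
  simpa only [slope_def_field] using hg.secant_strict_mono ha hxs hys hxa hya hxy

lemma nat_mul_apply_one_div_eq_slope (h0 : f 0 = 0) (n : ℕ) :
    (n : ℝ) * f (1 / n) = slope f 0 (1 / n) := by
  rw [slope_def_field, h0, sub_zero, sub_zero, div_div_eq_mul_div, div_one, mul_comm]

lemma StrictConvexOn.strictMonoOn_neg_nat_mul_apply_one_div
    (hf : StrictConvexOn ℝ (Ici 0) f) (h0 : f 0 = 0) :
    StrictMonoOn (fun n : ℕ => -(n : ℝ) * f (1 / n)) (Ici 1) := by
  intro m (hm : 1 ≤ m) n _ hmn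
  have hm₀ : (0 : ℝ) < m := by exact_mod_cast hm
  have hn₀ : (0 : ℝ) < n := hm₀.trans (by exact_mod_cast hmn)
  have hlt : 1 / (n : ℝ) < 1 / m := one_div_lt_one_div_of_lt hm₀ (by exact_mod_cast hmn)
  have hmem : ∀ k : ℝ, 0 < k → 1 / k ∈ Ici (0 : ℝ) \ {0} := fun k hk =>
    ⟨(one_div_pos.mpr hk).le, (one_div_pos.mpr hk).ne'⟩
  simp only [neg_mul, neg_lt_neg_iff, nat_mul_apply_one_div_eq_slope h0]
  exact hf.strictMonoOn_slope self_mem_Ici (hmem n hn₀) (hmem m hm₀) hlt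

lemma tendsto_nat_mul_apply_one_div {f' : ℝ} (hf : HasDerivWithinAt f f' (Ioi 0) 0)
    (h0 : f 0 = 0) : Tendsto (fun n : ℕ => (n : ℝ) * f (1 / n)) atTop (𝓝 f') := by
  have hinv : Tendsto (fun n : ℕ => 1 / (n : ℝ)) atTop (𝓝[>] 0) := by
    simpa only [one_div, Function.comp_def] using
      tendsto_inv_atTop_nhdsGT_zero.comp tendsto_natCast_atTop_atTop
  simpa only [nat_mul_apply_one_div_eq_slope h0, Function.comp_def] using
    ((hasDerivWithinAt_iff_tendsto_slope' self_notMem_Ioi).mp hf).comp hinv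

lemma ConvexOn.mul_le_of_hasDerivWithinAt_Ioi_zero {f' : ℝ} (hf : ConvexOn ℝ (Ici 0) f)
    (h0 : f 0 = 0) (hf' : HasDerivWithinAt f f' (Ioi 0) 0) {x : ℝ} (hx : 0 ≤ x) :
    f' * x ≤ f x := by
  rcases hx.eq_or_lt with rfl | hx
  · rw [mul_zero, h0]
  have hslope := hf.le_slope_of_hasDerivWithinAt_Ioi self_mem_Ici hx.le hx hf'
  rw [slope_def_field, h0, sub_zero, sub_zero, le_div_iff₀ hx] at hslope
  exact hslope

end ChordSlopes

lemma uniformDist_of_mem {n i : ℕ} (hi : i ∈ Finset.range n) : uniformDist n i = 1 / n :=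
  indicator_of_mem (Finset.mem_coe.mpr hi) _

lemma uniformDist_of_notMem {n i : ℕ} (hi : i ∉ Finset.range n) : uniformDist n i = 0 :=
  indicator_of_notMem (Finset.mem_coe.not.mpr hi) _

lemma sum_range_comp_uniformDist (g : ℝ → ℝ) (n : ℕ) :
    ∑ i ∈ Finset.range n, g (uniformDist n i) = n * g (1 / n) := by
  rw [Finset.sum_congr rfl fun i hi => by rw [uniformDist_of_mem hi], Finset.sum_const,
    Finset.card_range, nsmul_eq_mul]

lemma isProbDist_uniformDist {n : ℕ} (hn : n ≠ 0) : IsProbDist (uniformDist n) := by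
  refine ⟨fun i => indicator_nonneg (fun _ _ => by positivity) i, ?_⟩
  have hsum : HasSum (uniformDist n) (∑ i ∈ Finset.range n, uniformDist n i) :=
    hasSum_sum_of_ne_finset_zero fun i hi => uniformDist_of_notMem hi
  rwa [sum_range_comp_uniformDist (fun x => x), mul_one_div_cancel (by exact_mod_cast hn)] at hsum

lemma tsum_comp_uniformDist {f : ℝ → ℝ} (h0 : f 0 = 0) (n : ℕ) :
    ∑' i, f (uniformDist n i) = n * f (1 / n) := by
  rw [tsum_eq_sum (s := Finset.range n) fun i hi => by rw [uniformDist_of_notMem hi, h0],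
    sum_range_comp_uniformDist]

lemma IsProbDist.neg_tsum_le {f : ℝ → ℝ} {c : ℝ} (hc : c ≤ 0) (hfc : ∀ x, 0 ≤ x → c * x ≤ f x)
    {p : ℕ → ℝ} (hp : IsProbDist p) : -∑' i, f (p i) ≤ -c := by
  by_cases hsum : Summable fun i => f (p i)
  · have hle := hp.2.mul_left c |>.tsum_eq ▸ (hp.2.summable.mul_left c).tsum_le_tsum
      (fun i => hfc (p i) (hp.1 i)) hsum
    rw [mul_one] at hle
    exact neg_le_neg hle
  · -- a non-summable `∑'` is `0`, which is where `c ≤ 0` is needed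
    rw [tsum_eq_zero_of_not_summable hsum, neg_zero]
    exact neg_nonneg.mpr hc

theorem stmt8 (f : ℝ → ℝ) (hf : IsEntropyGenerator f) :
    StrictMonoOn (fun n : ℕ => -(n : ℝ) * f (1 / (n : ℝ))) (Set.Ici 1) ∧
    Filter.Tendsto (fun n : ℕ => -(n : ℝ) * f (1 / (n : ℝ))) Filter.atTop
      (nhds (-deriv f 0)) ∧
    IsLUB {x : ℝ | ∃ p : ℕ → ℝ, IsProbDist p ∧ x = -∑' i, f (p i)}
      (-deriv f 0) := by
  obtain ⟨hanalytic, hconvex, hf0, hf1, -⟩ := hf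
  have hderiv : HasDerivWithinAt f (deriv f 0) (Ioi 0) 0 :=
    (hanalytic 0 self_mem_Ici).differentiableAt.hasDerivAt.hasDerivWithinAt
  have htangent : ∀ x, 0 ≤ x → deriv f 0 * x ≤ f x := fun x hx =>
    hconvex.convexOn.mul_le_of_hasDerivWithinAt_Ioi_zero hf0 hderiv hx
  have hderiv_nonpos : deriv f 0 ≤ 0 := by simpa [hf1] using htangent 1 zero_le_one
  have hlim : Tendsto (fun n : ℕ => -(n : ℝ) * f (1 / n)) atTop (𝓝 (-deriv f 0)) := by
    simpa only [neg_mul] using (tendsto_nat_mul_apply_one_div hderiv hf0).neg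
  refine ⟨hconvex.strictMonoOn_neg_nat_mul_apply_one_div hf0, hlim, ?_, ?_⟩
  · rintro _ ⟨p, hp, rfl⟩
    exact hp.neg_tsum_le hderiv_nonpos htangent
  · intro b hb
    refine le_of_tendsto hlim ((eventually_ne_atTop 0).mono fun n hn => hb ?_)
    exact ⟨uniformDist n, isProbDist_uniformDist hn, by rw [tsum_comp_uniformDist hf0, neg_mul]⟩
end

section
/- Let f be an entropy generator and let a, b be real numbers with 0 < a < b < −f'(0). Then there exist N ∈ ℕ and reals q̃_1, q̃_2 with 0 < q̃_1 < q̃_2 < 1 such that every value in the interval [a, b] is attained as H_f(Q) for some probability distribution Q = (q̃_1, q̃_2, q_3, …, q_N) on {1,…,N} whose first two coordinates are q̃_1 and q̃_2. -/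
/-!
Put the masses `δ, 2δ` on the first two atoms and spread the remaining mass `m = 1 - 3δ` over
the other `N` atoms along the segment from `(m, 0, …, 0)` to the uniform `(m/N, …, m/N)`.
At the start the entropy is close to `-(f 0 + f 0 + f 1) = 0 < a`; at the end it is
`-(f δ + f (2δ)) - N f (m/N)`, which tends to `-m f'(0) ≈ -f'(0) > b` as `N → ∞`.
Choosing `δ` small and then `N` large, the intermediate value theorem along the segment
attains every value of `[a, b]`.
-/

open Filter Set Topology

lemma tendsto_nat_mul_apply_div {f : ℝ → ℝ} {d : ℝ} (hf0 : f 0 = 0) (hd : HasDerivAt f d 0)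
    (m : ℝ) : Tendsto (fun n : ℕ => n * f (m / n)) atTop (𝓝 (m * d)) := by
  have hscaled : HasDerivAt (fun x => f (m * x)) (m * d) 0 := by
    simpa [Function.comp_def, mul_comm] using
      hd.comp_of_eq (x := 0) ((hasDerivAt_id 0).const_mul m) (by simp)
  have hinv : Tendsto (fun n : ℕ => (n : ℝ)⁻¹) atTop (𝓝[≠] 0) :=
    (tendsto_inv_atTop_nhdsGT_zero.comp tendsto_natCast_atTop_atTop).mono_right
      (nhdsWithin_mono _ fun _ hx => ne_of_gt hx)
  refine ((hasDerivAt_iff_tendsto_slope.1 hscaled).comp hinv).congr fun n => ?_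
  simp [slope_def_field, hf0, div_eq_mul_inv, mul_comm]

lemma exists_add_mul_eq_of_mem_uIcc {f : ℝ → ℝ} (hf : ContinuousOn f (Ici 0)) (hf0 : f 0 = 0)
    {m : ℝ} (hm : 0 ≤ m) (K : ℕ) {c : ℝ}
    (hc : c ∈ uIcc (f m) ((K + 1) * f (m / (K + 1)))) :
    ∃ y z, 0 ≤ y ∧ 0 ≤ z ∧ y + K * z = m ∧ f y + K * f z = c := by
  set r := m / (K + 1)
  have hr : 0 ≤ r := by positivity
  have hpath : ∀ t ∈ uIcc (0 : ℝ) 1, 0 ≤ (1 - t) * m + t * r ∧ 0 ≤ t * r := by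
    intro t ht
    rw [uIcc_of_le zero_le_one] at ht
    exact ⟨by nlinarith [ht.1, ht.2], mul_nonneg ht.1 hr⟩
  have hcont : ContinuousOn (fun t => f ((1 - t) * m + t * r) + K * f (t * r)) (uIcc 0 1) :=
    (hf.comp (by fun_prop) fun t ht => (hpath t ht).1).add
      (continuousOn_const.mul (hf.comp (by fun_prop) fun t ht => (hpath t ht).2))
  have hstart : f ((1 - 0) * m + 0 * r) + K * f (0 * r) = f m := by simp [hf0]
  have hend : f ((1 - 1) * m + 1 * r) + K * f (1 * r) = (K + 1) * f r := by
    simp only [sub_self, zero_mul, zero_add, one_mul]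
    ring
  rw [← hstart, ← hend] at hc
  obtain ⟨t, ht, rfl⟩ := intermediate_value_uIcc hcont hc
  refine ⟨_, _, (hpath t ht).1, (hpath t ht).2, ?_, rfl⟩
  simp only [r]
  field_simp
  ring

lemma eventually_entropy_head_bounds {f : ℝ → ℝ}
    (h0 : ContinuousAt f 0) (h1 : ContinuousAt f 1) (hf0 : f 0 = 0) (hf1 : f 1 = 0)
    {a b d : ℝ} (ha : 0 < a) (hb : b < -d) :
    ∀ᶠ δ in 𝓝 0, -(f δ + f (2 * δ) + f (1 - 3 * δ)) < a ∧
      b < -(f δ + f (2 * δ)) - (1 - 3 * δ) * d := by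
  have h2 : ContinuousAt (fun δ => f (2 * δ)) 0 := h0.comp_of_eq (by fun_prop) (by simp)
  have h3 : ContinuousAt (fun δ => f (1 - 3 * δ)) 0 := h1.comp_of_eq (by fun_prop) (by simp)
  refine (((h0.add h2).add h3).neg.eventually_lt continuousAt_const ?_).and
    (continuousAt_const.eventually_lt ((h0.add h2).neg.sub (by fun_prop)) ?_)
  · simp [hf0, hf1, ha]
  · simpa [hf0] using hb

lemma sum_comp_cons_cons_cons_const {α : Type*} (g : α → ℝ) (x₁ x₂ y z : α) (K : ℕ) :
    ∑ i, g ((Fin.cons x₁ (Fin.cons x₂ (Fin.cons y fun _ : Fin K => z)) :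
      Fin (K + 3) → α) i) =
      g x₁ + g x₂ + g y + K * g z := by
  simp [Fin.sum_univ_succ, add_assoc]

theorem stmt10_general (f : ℝ → ℝ) (hf : IsEntropyGenerator f)
    (a b : ℝ) (ha : 0 < a) (hb : b < -deriv f 0) :
    ∃ (N : ℕ) (q₁ q₂ : ℝ), 0 < q₁ ∧ q₁ < q₂ ∧ q₂ < 1 ∧
      ∀ c ∈ Set.Icc a b, ∃ Q : Fin (N + 2) → ℝ,
        (∀ i, 0 ≤ Q i) ∧ (∑ i, Q i) = 1 ∧
        Q 0 = q₁ ∧ Q 1 = q₂ ∧ (-∑ i, f (Q i)) = c := by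
  obtain ⟨han, -, hf0, hf1, -⟩ := hf
  have hcont : ContinuousOn f (Ici 0) := fun x hx => (han x hx).continuousAt.continuousWithinAt
  have hd : HasDerivAt f (deriv f 0) 0 := (han 0 self_mem_Ici).differentiableAt.hasDerivAt
  have hhead := eventually_entropy_head_bounds (han 0 self_mem_Ici).continuousAt
    (han 1 (mem_Ici.2 zero_le_one)).continuousAt hf0 hf1 ha hb
  obtain ⟨δ, ⟨hδa, hδb⟩, hδ0, hδ3⟩ := ((hhead.filter_mono nhdsWithin_le_nhds).and
    (Ioo_mem_nhdsGT (by norm_num : (0 : ℝ) < 1 / 3))).exists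
  set m := 1 - 3 * δ
  have hspread := (tendsto_add_atTop_iff_nat 1).2 (tendsto_nat_mul_apply_div hf0 hd m)
  obtain ⟨K, hK⟩ := (hspread.eventually (eventually_lt_nhds
    (by linarith : m * deriv f 0 < -b - (f δ + f (2 * δ))))).exists
  push_cast at hK
  refine ⟨K + 1, δ, 2 * δ, hδ0, by linarith, by linarith, fun c hc => ?_⟩
  obtain ⟨y, z, hy, hz, hyz, hfyz⟩ := exists_add_mul_eq_of_mem_uIcc hcont hf0 (m := m)
    (by linarith) K (c := -c - (f δ + f (2 * δ)))
    (Icc_subset_uIcc' ⟨by linarith [hc.2], by linarith [hc.1]⟩)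
  refine ⟨Fin.cons δ (Fin.cons (2 * δ) (Fin.cons y fun _ : Fin K => z)), ?_, ?_, rfl,
    Fin.cons_one _ _, ?_⟩
  · simp only [Fin.forall_fin_succ, Fin.cons_zero, Fin.cons_succ]
    exact ⟨hδ0.le, by linarith, hy, fun _ => hz⟩
  · exact (sum_comp_cons_cons_cons_const id δ (2 * δ) y z K).trans (by simp only [id]; linarith)
  · exact (congrArg Neg.neg (sum_comp_cons_cons_cons_const f δ (2 * δ) y z K)).trans
      (by linarith)

theorem stmt10 (f : ℝ → ℝ) (hf : IsEntropyGenerator f)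
    (a b : ℝ) (ha : 0 < a) (hab : a < b) (hb : b < -deriv f 0) :
    ∃ (N : ℕ) (q₁ q₂ : ℝ), 0 < q₁ ∧ q₁ < q₂ ∧ q₂ < 1 ∧
      ∀ c ∈ Set.Icc a b, ∃ Q : Fin (N + 2) → ℝ,
        (∀ i, 0 ≤ Q i) ∧ (∑ i, Q i) = 1 ∧
        Q 0 = q₁ ∧ Q 1 = q₂ ∧ (-∑ i, f (Q i)) = c :=
  stmt10_general f hf a b ha hb
end

section
/- Let f be an entropy generator, let g : [0,−f'(0)) × [0,−f'(0)) → ℝ satisfy H_f(P⊗Q) = g(H_f(P), H_f(Q)) for all probability distributions P, Q on ℕ, and let 0 < a < b < −f'(0). Fix N, q̃_1, q̃_2 with 0 < q̃_1 < q̃_2 < 1 such that every value in [a,b] is attained as H_f of a distribution on {1,…,N} with first two coordinates q̃_1, q̃_2. Then for every x, y ∈ (a,b) and every probability distribution P = (p_1,…,p_N) on {1,…,N} with H_f(P) = x, the partial derivative ∂g/∂y exists at (x,y) and equals (f'(q̃_1) − f'(q̃_2))^{−1} · ∑_{i=1}^N p_i·(f'(p_i·q̃_1) − f'(p_i·q̃_2));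 in particular, ∂g/∂y at (x,y) depends only on x and not on y. -/
/-!
Shifting mass `ε` from the second to the first atom of a distribution `Q` with `H_f(Q) = y`
gives distributions `Q_ε`, and `ε ↦ H_f(Q_ε)` has derivative `f'(q₂) - f'(q₁) ≠ 0` at `0`
by strict convexity. Since `H_f(P ⊗ Q_ε) = g(x, H_f(Q_ε))`, the inverse function theorem
exhibits `g(x, ·)` near `y` as `ε ↦ H_f(P ⊗ Q_ε)` composed with a local inverse of
`ε ↦ H_f(Q_ε)`, and the chain rule gives `∂g/∂y` as the quotient of the two derivatives in `ε`.
-/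

open Filter Set Topology

theorem HasStrictDerivAt.hasDerivAt_of_eventually_eq_comp {𝕜 : Type*}
    [NontriviallyNormedField 𝕜] [CompleteSpace 𝕜] {G φ ψ : 𝕜 → 𝕜} {φ' ψ' a : 𝕜}
    (hφ : HasStrictDerivAt φ φ' a) (hφ' : φ' ≠ 0) (hψ : HasDerivAt ψ ψ' a)
    (h : ∀ᶠ ε in 𝓝 a, ψ ε = G (φ ε)) :
    HasDerivAt G (ψ' / φ') (φ a) := by
  set r := hφ.localInverse φ φ' a hφ'
  have hr : HasStrictDerivAt r φ'⁻¹ (φ a) := hφ.to_localInverse hφ'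
  have hra : r (φ a) = a := HasStrictFDerivAt.localInverse_apply_image ..
  have hψr : ∀ᶠ t in 𝓝 (φ a), ψ (r t) = G (φ (r t)) :=
    (hra ▸ hr.hasDerivAt.continuousAt.tendsto).eventually h
  have hGr : ψ ∘ r =ᶠ[𝓝 (φ a)] G := by
    filter_upwards [hψr, hφ.eventually_right_inverse hφ'] with t hψt hφt
    rw [Function.comp_apply, hψt, hφt]
  rw [div_eq_mul_inv]
  exact ((hra ▸ hψ).comp (φ a) hr.hasDerivAt).congr_of_eventuallyEq hGr.symm

theorem hasStrictDerivAt_tsum_comp_add_mul {ι : Type*} {f f' : ℝ → ℝ} (hf₀ : f 0 = 0)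
    {u v : ι → ℝ} {s : Finset ι} (hu : ∀ i ∉ s, u i = 0) (hv : ∀ i ∉ s, v i = 0)
    (hf : ∀ i ∈ s, HasStrictDerivAt f (f' (u i)) (u i)) :
    HasStrictDerivAt (fun ε => ∑' i, f (u i + ε * v i)) (∑ i ∈ s, f' (u i) * v i) 0 := by
  have hsum : (fun ε => ∑' i, f (u i + ε * v i)) = fun ε => ∑ i ∈ s, f (u i + ε * v i) :=
    funext fun ε => tsum_eq_sum fun i hi => by rw [hu i hi, hv i hi, mul_zero, add_zero, hf₀]
  rw [hsum]
  refine HasStrictDerivAt.fun_sum fun i hi => ?_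
  have hline : HasStrictDerivAt (fun ε : ℝ => u i + ε * v i) (v i) 0 := by
    simpa using ((hasStrictDerivAt_id (0 : ℝ)).mul_const (v i)).const_add (u i)
  exact (by simpa using hf i hi : HasStrictDerivAt f (f' (u i)) (u i + 0 * v i)).comp 0 hline

theorem hasStrictDerivAt_tsum_comp_mul_add_mul {ι κ : Type*} {f f' : ℝ → ℝ} (hf₀ : f 0 = 0)
    {p : ι → ℝ} {u v : κ → ℝ} {s : Finset ι} {t : Finset κ} (hp : ∀ i ∉ s, p i = 0)
    (hu : ∀ j ∉ t, u j = 0) (hv : ∀ j ∉ t, v j = 0)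
    (hf : ∀ i ∈ s, ∀ j ∈ t, HasStrictDerivAt f (f' (p i * u j)) (p i * u j)) :
    HasStrictDerivAt (fun ε => ∑' ij : ι × κ, f (p ij.1 * (u ij.2 + ε * v ij.2)))
      (∑ i ∈ s, p i * ∑ j ∈ t, f' (p i * u j) * v j) 0 := by
  have hvanish : ∀ w : κ → ℝ, (∀ j ∉ t, w j = 0) → ∀ ij ∉ s ×ˢ t, p ij.1 * w ij.2 = 0 := by
    intro w hw ij hij
    rcases not_and_or.1 (Finset.mem_product.not.1 hij) with hi | hj
    · rw [hp _ hi, zero_mul]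
    · rw [hw _ hj, mul_zero]
  convert hasStrictDerivAt_tsum_comp_add_mul hf₀ (hvanish u hu) (hvanish v hv)
    fun ij hij => hf ij.1 (Finset.mem_product.1 hij).1 ij.2 (Finset.mem_product.1 hij).2 using 1
  · ext ε
    simp only [mul_add, mul_left_comm]
  · simp only [Finset.sum_product, Finset.mul_sum, mul_left_comm]

def massTransfer (m n : ℕ) : ℕ → ℝ := Pi.single m 1 - Pi.single n 1

theorem massTransfer_apply_left {m n : ℕ} (hmn : m ≠ n) : massTransfer m n m = 1 := by
  simp [massTransfer, hmn]

theorem massTransfer_apply_right {m n : ℕ} (hmn : m ≠ n) : massTransfer m n n = -1 := by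
  simp [massTransfer, hmn.symm]

theorem massTransfer_eq_zero {m n j : ℕ} (hm : j ≠ m) (hn : j ≠ n) : massTransfer m n j = 0 := by
  simp [massTransfer, hm, hn]

theorem sum_mul_massTransfer {m n : ℕ} {s : Finset ℕ} (hm : m ∈ s) (hn : n ∈ s) (F : ℕ → ℝ) :
    ∑ j ∈ s, F j * massTransfer m n j = F m - F n := by
  simp [massTransfer, Pi.single_apply, mul_sub, Finset.sum_sub_distrib, hm, hn]

theorem IsProbDist.add_mul_massTransfer {Q : ℕ → ℝ} (hQ : IsProbDist Q) {m n : ℕ} (hmn : m ≠ n)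
    {ε : ℝ} (hε : ε ∈ Ioo (-Q m) (Q n)) : IsProbDist fun j => Q j + ε * massTransfer m n j := by
  refine ⟨fun j => ?_, ?_⟩
  · dsimp only
    rcases eq_or_ne j m with rfl | hjm
    · rw [massTransfer_apply_left hmn]
      linarith [hε.1]
    rcases eq_or_ne j n with rfl | hjn
    · rw [massTransfer_apply_right hmn]
      linarith [hε.2]
    simpa [massTransfer_eq_zero hjm hjn] using hQ.1 j
  · have htransfer : HasSum (massTransfer m n) (1 - 1) :=
      (hasSum_pi_single m (1 : ℝ)).sub (hasSum_pi_single n 1)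
    simpa using hQ.2.add (htransfer.mul_left ε)

theorem stmt12_general (f : ℝ → ℝ) (hf : IsEntropyGenerator f)
    (g : ℝ → ℝ → ℝ)
    (hg : ∀ p q : ℕ → ℝ, IsProbDist p → IsProbDist q →
      (-∑' ij : ℕ × ℕ, f (p ij.1 * q ij.2)) =
        g (-∑' i, f (p i)) (-∑' j, f (q j)))
    (a b : ℝ)
    (N : ℕ) (q₁ q₂ : ℝ) (hq₁ : 0 < q₁) (hq₁₂ : q₁ < q₂)
    (hattain : ∀ c ∈ Set.Icc a b, ∃ Q : ℕ → ℝ, IsProbDist Q ∧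
      (∀ i, N ≤ i → Q i = 0) ∧ Q 0 = q₁ ∧ Q 1 = q₂ ∧ (-∑' i, f (Q i)) = c) :
    ∀ x ∈ Set.Ioo a b, ∀ y ∈ Set.Ioo a b,
      ∀ P : ℕ → ℝ, IsProbDist P → (∀ i, N ≤ i → P i = 0) →
        (-∑' i, f (P i)) = x →
        HasDerivAt (fun t => g x t)
          ((deriv f q₁ - deriv f q₂)⁻¹ *
            ∑ i ∈ Finset.range N, P i * (deriv f (P i * q₁) - deriv f (P i * q₂))) y := by
  obtain ⟨hfa, hfc, hf₀, -, -⟩ := hf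
  intro x _ y hy P hP hPN rfl
  obtain ⟨Q, hQ, hQN, rfl, rfl, rfl⟩ := hattain y (Ioo_subset_Icc_self hy)
  have hN : 1 < N := by
    by_contra! hN
    linarith [hQN 1 hN]
  have h0 : 0 ∈ Finset.range N := Finset.mem_range.2 (by omega)
  have h1 : 1 ∈ Finset.range N := Finset.mem_range.2 hN
  have hout : ∀ {u : ℕ → ℝ}, (∀ i, N ≤ i → u i = 0) → ∀ i ∉ Finset.range N, u i = 0 :=
    fun hu i hi => hu i (by simpa using hi)
  have hd : ∀ j ∉ Finset.range N, massTransfer 0 1 j = 0 := fun j hj =>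
    massTransfer_eq_zero (by rintro rfl; exact hj h0) (by rintro rfl; exact hj h1)
  have hf' : ∀ t, 0 ≤ t → HasStrictDerivAt f (deriv f t) t :=
    fun t ht => (hfa t ht).hasStrictDerivAt
  have hφ := (hasStrictDerivAt_tsum_comp_add_mul hf₀ (hout hQN) hd
    fun j _ => hf' _ (hQ.1 j)).fun_neg
  have hψ := (hasStrictDerivAt_tsum_comp_mul_add_mul hf₀ (hout hPN) (hout hQN) hd
    fun i _ j _ => hf' _ (mul_nonneg (hP.1 i) (hQ.1 j))).fun_neg
  simp only [sum_mul_massTransfer h0 h1] at hφ hψ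
  have hmono : deriv f (Q 0) < deriv f (Q 1) :=
    hfc.strictMonoOn_deriv (fun t ht => (hfa t ht).differentiableAt) hq₁.le
      (hq₁.trans hq₁₂).le hq₁₂
  have hgraph : ∀ᶠ ε in 𝓝 0, -∑' ij : ℕ × ℕ, f (P ij.1 * (Q ij.2 + ε * massTransfer 0 1 ij.2)) =
      g (-∑' i, f (P i)) (-∑' j, f (Q j + ε * massTransfer 0 1 j)) := by
    filter_upwards [Ioo_mem_nhds (neg_lt_zero.2 hq₁) (hq₁.trans hq₁₂)] with ε hε
    exact hg P _ hP (hQ.add_mul_massTransfer zero_ne_one hε)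
  have hderiv := hφ.hasDerivAt_of_eventually_eq_comp (neg_ne_zero.2 (sub_ne_zero.2 hmono.ne))
    hψ.hasDerivAt hgraph
  rw [neg_div_neg_eq, div_eq_inv_mul] at hderiv
  simpa only [zero_mul, add_zero] using hderiv

theorem stmt12 (f : ℝ → ℝ) (hf : IsEntropyGenerator f)
    (g : ℝ → ℝ → ℝ)
    (hg : ∀ p q : ℕ → ℝ, IsProbDist p → IsProbDist q →
      (-∑' ij : ℕ × ℕ, f (p ij.1 * q ij.2)) =
        g (-∑' i, f (p i)) (-∑' j, f (q j)))
    (a b : ℝ) (ha : 0 < a) (hab : a < b) (hb : b < -deriv f 0)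
    (N : ℕ) (q₁ q₂ : ℝ) (hq₁ : 0 < q₁) (hq₁₂ : q₁ < q₂) (hq₂ : q₂ < 1)
    (hattain : ∀ c ∈ Set.Icc a b, ∃ Q : ℕ → ℝ, IsProbDist Q ∧
      (∀ i, N ≤ i → Q i = 0) ∧ Q 0 = q₁ ∧ Q 1 = q₂ ∧ (-∑' i, f (Q i)) = c) :
    ∀ x ∈ Set.Ioo a b, ∀ y ∈ Set.Ioo a b,
      ∀ P : ℕ → ℝ, IsProbDist P → (∀ i, N ≤ i → P i = 0) →
        (-∑' i, f (P i)) = x →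
        HasDerivAt (fun t => g x t)
          ((deriv f q₁ - deriv f q₂)⁻¹ *
            ∑ i ∈ Finset.range N, P i * (deriv f (P i * q₁) - deriv f (P i * q₂))) y :=
  stmt12_general f hf g hg a b N q₁ q₂ hq₁ hq₁₂ hattain
end
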